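/- arXiv:1709.04039 — 3 statements merged into one kernel-verified Lean document; each statement's English description precedes it below -/
import Mathlib

section
/- For any prime p with p ≡ 1 (mod 3), any a ≥ 1, and any natural number d ≤ p^a with d ≡ 2 (mod 3), the sum ∑_{n=0}^{2p^a - 1} C(2n, n+d) is congruent to -4 modulo p. -/
/-!
Pascal's rule applied twice gives, by induction on `N`, the trisection identity
`∑_{n<N} C(2n, n+d) = ∑_j (C(2N, N+d+1+3j) - C(2N, N+d+2+3j))`.
For `N = 2q` with `q = p^a`, Lucas' theorem gives `C(4q, m) ≡ C(4, m/q)` when `q ∣ m` and `≡ 0`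
otherwise. As `q ≡ 1` and `d ≡ 2 (mod 3)`, the only surviving term is `C(4q, 3q) ≡ C(4, 3) = 4`,
which occurs with a minus sign, at the `j` with `d + 2 + 3j = q`.
-/

open Finset

theorem Nat.choose_add_two_add_two (n k : ℕ) :
    (n + 2).choose (k + 2) = n.choose k + 2 * n.choose (k + 1) + n.choose (k + 2) := by
  simp only [Nat.choose_succ_succ]
  ring

theorem choose_two_mul_succ_add_succ (N r : ℕ) :
    ((2 * (N + 1)).choose (N + 1 + (r + 1)) : ℤ) =
      (2 * N).choose (N + r) + 2 * (2 * N).choose (N + r + 1) + (2 * N).choose (N + r + 2) := by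
  rw [show 2 * (N + 1) = 2 * N + 2 by ring, show N + 1 + (r + 1) = N + r + 2 by ring,
    Nat.choose_add_two_add_two]
  push_cast
  ring

theorem sum_range_choose_two_mul_add {N M : ℕ} (hNM : N ≤ M) (d : ℕ) :
    ∑ n ∈ range N, ((2 * n).choose (n + d) : ℤ) =
      ∑ j ∈ range M, (((2 * N).choose (N + (d + 1 + 3 * j)) : ℤ) -
        (2 * N).choose (N + (d + 2 + 3 * j))) := by
  induction N with
  | zero => simp [Nat.choose_eq_zero_of_lt]
  | succ N ih =>
    have step (j : ℕ) :
        ((2 * (N + 1)).choose (N + 1 + (d + 1 + 3 * j)) : ℤ) -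
            (2 * (N + 1)).choose (N + 1 + (d + 2 + 3 * j)) =
          (((2 * N).choose (N + (d + 3 * j)) : ℤ) - (2 * N).choose (N + (d + 3 * (j + 1)))) +
          (((2 * N).choose (N + (d + 1 + 3 * j)) : ℤ) - (2 * N).choose (N + (d + 2 + 3 * j))) := by
      rw [show d + 1 + 3 * j = d + 3 * j + 1 by ring,
        show d + 2 + 3 * j = d + 1 + 3 * j + 1 by ring, choose_two_mul_succ_add_succ, choose_two_mul_succ_add_succ]
      ring_nf
    rw [sum_range_succ, ih (by omega), sum_congr rfl fun j _ => step j, sum_add_distrib,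
      sum_range_sub' (fun j => ((2 * N).choose (N + (d + 3 * j)) : ℤ)),
      Nat.choose_eq_zero_of_lt (by omega : 2 * N < N + (d + 3 * M))]
    simp only [Nat.cast_zero, mul_zero, add_zero, sub_zero]
    ring

variable {p : ℕ} [Fact p.Prime]

theorem cast_choose_prime_mul_prime_mul (a b : ℕ) :
    ((p * a).choose (p * b) : ZMod p) = a.choose b := by
  exact_mod_cast (ZMod.intCast_eq_intCast_iff _ _ _).mpr Choose.choose_mul_mul_modEq_choose

theorem cast_choose_prime_pow_mul_prime_pow_mul (t c b : ℕ) :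
    ((p ^ t * c).choose (p ^ t * b) : ZMod p) = c.choose b := by
  exact_mod_cast (ZMod.intCast_eq_intCast_iff _ _ _).mpr Choose.choose_pow_mul_pow_mul_modEq_choose

theorem cast_choose_eq_zero_of_prime_dvd_of_not_dvd {n k : ℕ} (hn : p ∣ n) (hk : ¬ p ∣ k) :
    (n.choose k : ZMod p) = 0 := by
  have hlucas := (ZMod.intCast_eq_intCast_iff _ _ _).mpr
    (Choose.choose_modEq_choose_mod_mul_choose_div (n := n) (k := k) (p := p))
  push_cast at hlucas
  rw [hlucas, Nat.mod_eq_zero_of_dvd hn,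
    Nat.choose_eq_zero_of_lt (Nat.pos_of_ne_zero fun h => hk (Nat.dvd_of_mod_eq_zero h))]
  simp

theorem cast_choose_prime_pow_mul_of_not_dvd {t m : ℕ} (c : ℕ) (hm : ¬ p ^ t ∣ m) :
    ((p ^ t * c).choose m : ZMod p) = 0 := by
  induction t generalizing m with
  | zero => simp at hm
  | succ t ih =>
    rw [pow_succ', mul_assoc]
    by_cases hpm : p ∣ m
    · obtain ⟨m, rfl⟩ := hpm
      rw [cast_choose_prime_mul_prime_mul]
      exact ih fun h => hm (pow_succ' p t ▸ mul_dvd_mul_left p h)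
    · exact cast_choose_eq_zero_of_prime_dvd_of_not_dvd (dvd_mul_right _ _) hpm

theorem cast_choose_prime_pow_mul (t c m : ℕ) :
    ((p ^ t * c).choose m : ZMod p) =
      if p ^ t ∣ m then (c.choose (m / p ^ t) : ZMod p) else 0 := by
  split_ifs with hm
  · obtain ⟨b, rfl⟩ := hm
    rw [cast_choose_prime_pow_mul_prime_pow_mul,
      Nat.mul_div_cancel_left _ (pow_pos (Fact.out : p.Prime).pos t)]
  · exact cast_choose_prime_pow_mul_of_not_dvd c hm

theorem cast_choose_four_mul_prime_pow {t s : ℕ} (ht : p ^ t % 3 = 1) (hs : 0 < s)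
    (hs3 : s % 3 ≠ 2) :
    ((p ^ t * 4).choose (2 * p ^ t + s) : ZMod p) = if s = p ^ t then 4 else 0 := by
  have hq : 0 < p ^ t := pow_pos (Fact.out : p.Prime).pos t
  rw [cast_choose_prime_pow_mul]
  simp only [Nat.dvd_add_right (dvd_mul_left (p ^ t) 2)]
  split_ifs with hdvd hsq hsq
  · subst hsq
    rw [show 2 * p ^ t + p ^ t = p ^ t * 3 by ring, Nat.mul_div_cancel_left _ hq]
    norm_num
  · obtain ⟨k, rfl⟩ := hdvd
    have hk3 : (p ^ t * k) % 3 = k % 3 := by rw [Nat.mul_mod, ht, one_mul, Nat.mod_mod]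
    have hk0 : k ≠ 0 := by rintro rfl; simp at hs
    have hk1 : k ≠ 1 := by rintro rfl; simp at hsq
    rw [show 2 * p ^ t + p ^ t * k = p ^ t * (2 + k) by ring, Nat.mul_div_cancel_left _ hq,
      Nat.choose_eq_zero_of_lt (by omega)]
    simp
  · exact absurd (hsq ▸ dvd_refl _) hdvd
  · rfl

theorem stmt10_general (p a d : ℕ) (hp : p.Prime) (h3 : p % 3 = 1)
    (hd : d ≤ p ^ a) (hd3 : d % 3 = 2) :
    (∑ n ∈ Finset.range (2 * p^a), ((2*n).choose (n + d) : ℤ)) ≡ -4 [ZMOD (p : ℤ)] := by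
  have : Fact p.Prime := ⟨hp⟩
  have hpa3 : p ^ a % 3 = 1 := by rw [Nat.pow_mod, h3, one_pow, Nat.one_mod]
  obtain ⟨j₀, hj₀⟩ : ∃ j₀, d + 2 + 3 * j₀ = p ^ a := ⟨(p ^ a - (d + 2)) / 3, by omega⟩
  rw [← ZMod.intCast_eq_intCast_iff, sum_range_choose_two_mul_add le_rfl]
  push_cast
  rw [show 2 * (2 * p ^ a) = p ^ a * 4 by ring]
  have hterm (j : ℕ) :
      ((p ^ a * 4).choose (2 * p ^ a + (d + 1 + 3 * j)) : ZMod p) -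
          (p ^ a * 4).choose (2 * p ^ a + (d + 2 + 3 * j)) = if j₀ = j then -4 else 0 := by
    rw [cast_choose_four_mul_prime_pow hpa3 (by omega) (by omega),
      cast_choose_four_mul_prime_pow hpa3 (by omega) (by omega)]
    split_ifs <;> first | omega | ring
  rw [sum_congr rfl fun j _ => hterm j, sum_ite_eq, if_pos (mem_range.mpr (by omega))]

theorem stmt10 (p a d : ℕ) (hp : p.Prime) (h3 : p % 3 = 1) (ha : 1 ≤ a)
    (hd : d ≤ p ^ a) (hd3 : d % 3 = 2) :
    (∑ n ∈ Finset.range (2 * p^a), ((2*n).choose (n + d) : ℤ)) ≡ -4 [ZMOD (p : ℤ)] :=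
  stmt10_general p a d hp h3 hd hd3
end

section
/- For any prime p > 3 with p ≡ 1 (mod 3), and any a ≥ 1, the sum of the Catalan numbers ∑_{n=0}^{p^a - 1} C_n is congruent to 1 modulo p. -/
/-!
Write `B n` for the central binomial coefficient. Since `(n + 1) C_n = B n` and
`(n + 1) B (n + 1) = 2 (2n + 1) B n`, one has `2 C_n = 4 B n - B (n + 1)`, so the Catalan sum telescopes
to `2 ∑_{n < N} C_n = 3 ∑_{n < N} B n - B N + 1`. Modulo `p`, Lucas' theorem gives
`B (pN + r) ≡ B r · B N` for `r < p`, hence `∑_{n < p^a} B n ≡ (∑_{r < p} B r)^a` and `B (p^a) ≡ B 1 = 2`.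
With `p = 2m + 1`, `B r ≡ (-4)^r (m choose r)`, so `∑_{r < p} B r ≡ (-3)^m`, which is `1` by Euler's
criterion because `-3 = (2ω + 1)^2` for a primitive cube root of unity `ω ∈ 𝔽_p`, which exists as `3 ∣ p - 1`.
Altogether `2 ∑_{n < p^a} C_n ≡ 3 - 2 + 1 = 2`.
-/

open Finset

theorem Nat.two_mul_catalan_add_centralBinom_succ (n : ℕ) :
    2 * catalan n + (n + 1).centralBinom = 4 * n.centralBinom := by
  apply Nat.eq_of_mul_eq_mul_left n.succ_pos
  calc (n + 1) * (2 * catalan n + (n + 1).centralBinom)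
      = 2 * ((n + 1) * catalan n) + (n + 1) * (n + 1).centralBinom := by ring
    _ = 2 * n.centralBinom + 2 * (2 * n + 1) * n.centralBinom := by
        rw [succ_mul_catalan_eq_centralBinom, Nat.succ_mul_centralBinom_succ]
    _ = (n + 1) * (4 * n.centralBinom) := by ring

theorem two_mul_sum_range_catalan_add_centralBinom {R : Type*} [CommRing R] (N : ℕ) :
    2 * ∑ n ∈ range N, (catalan n : R) + (N.centralBinom : R)
      = 3 * ∑ n ∈ range N, (n.centralBinom : R) + 1 := by
  induction N with
  | zero => simp
  | succ N ih =>
    have step := congrArg (Nat.cast (R := R)) (Nat.two_mul_catalan_add_centralBinom_succ N)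
    push_cast at step
    rw [sum_range_succ, sum_range_succ]
    linear_combination ih + step

theorem IsPrimitiveRoot.isSquare_neg_three {K : Type*} [CommRing K] [IsDomain K] {ω : K}
    (hω : IsPrimitiveRoot ω 3) : IsSquare (-3 : K) := by
  have h := hω.geom_sum_eq_zero (by norm_num)
  simp only [sum_range_succ, range_zero, sum_empty] at h
  exact ⟨2 * ω + 1, by linear_combination (-4 : K) * h⟩

namespace ZMod

variable {p : ℕ} [hp : Fact p.Prime]

theorem isSquare_neg_three (h3 : p % 3 = 1) : IsSquare (-3 : ZMod p) := by
  have : Fact (Nat.Prime 3) := ⟨Nat.prime_three⟩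
  have hdvd : 3 ∣ Fintype.card (ZMod p)ˣ := by
    rw [card_units_eq_totient, Nat.totient_prime hp.out]
    omega
  obtain ⟨u, hu⟩ := exists_prime_orderOf_dvd_card 3 hdvd
  exact IsPrimitiveRoot.isSquare_neg_three (IsPrimitiveRoot.iff_orderOf.mpr (by rwa [orderOf_units]))

theorem neg_three_pow_div_two (h3 : p % 3 = 1) : (-3 : ZMod p) ^ (p / 2) = 1 := by
  have hne : (-3 : ZMod p) ≠ 0 := by
    rw [neg_ne_zero, show (3 : ZMod p) = ((3 : ℕ) : ZMod p) by norm_cast, Ne,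
      natCast_eq_zero_iff, Nat.prime_dvd_prime_iff_eq hp.out Nat.prime_three]
    omega
  exact (euler_criterion p hne).mp (isSquare_neg_three h3)

theorem centralBinom_eq_zero_of_le_two_mul {r : ℕ} (hr : r < p) (hpr : p ≤ 2 * r) :
    (r.centralBinom : ZMod p) = 0 := by
  rw [natCast_eq_zero_iff, Nat.centralBinom, two_mul]
  exact hp.out.dvd_choose_add hr hr (by omega)

/-- Lucas' theorem for central binomial coefficients. -/
theorem centralBinom_mul_add (N : ℕ) {r : ℕ} (hr : r < p) :
    ((p * N + r).centralBinom : ZMod p) = r.centralBinom * N.centralBinom := by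
  have hp0 := hp.out.pos
  have lucas := (intCast_eq_intCast_iff _ _ p).mpr
    (Choose.choose_modEq_choose_mod_mul_choose_div (p := p) (n := 2 * (p * N + r)) (k := p * N + r))
  push_cast at lucas
  rw [Nat.centralBinom, lucas, show p * N + r = r + p * N by ring, Nat.add_mul_mod_self_left,
    Nat.add_mul_div_left _ _ hp0, Nat.mod_eq_of_lt hr, Nat.div_eq_of_lt hr]
  by_cases h2r : 2 * r < p
  · rw [show 2 * (r + p * N) = 2 * r + p * (2 * N) by ring, Nat.add_mul_mod_self_left,
      Nat.add_mul_div_left _ _ hp0, Nat.mod_eq_of_lt h2r, Nat.div_eq_of_lt h2r, zero_add, zero_add]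
    rfl
  -- when `p ≤ 2r`, the last digit of `2(pN + r)` is `2r - p < r`, so both sides vanish
  · have hp2N : p * (2 * N + 1) = 2 * (p * N) + p := by ring
    rw [show 2 * (r + p * N) = (2 * r - p) + p * (2 * N + 1) by omega, Nat.add_mul_mod_self_left,
      Nat.mod_eq_of_lt (by omega), Nat.choose_eq_zero_of_lt (by omega),
      centralBinom_eq_zero_of_le_two_mul hr (by omega)]
    simp

theorem sum_range_mul_centralBinom (N : ℕ) :
    ∑ n ∈ range (p * N), (n.centralBinom : ZMod p)
      = (∑ r ∈ range p, (r.centralBinom : ZMod p)) * ∑ n ∈ range N, (n.centralBinom : ZMod p) := by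
  induction N with
  | zero => simp
  | succ N ih =>
    rw [mul_add_one, sum_range_add, ih, sum_range_succ, mul_add]
    congr 1
    rw [sum_mul]
    exact sum_congr rfl fun _ hr ↦ centralBinom_mul_add (p := p) N (mem_range.mp hr)

theorem sum_range_pow_centralBinom (a : ℕ) :
    ∑ n ∈ range (p ^ a), (n.centralBinom : ZMod p)
      = (∑ r ∈ range p, (r.centralBinom : ZMod p)) ^ a := by
  induction a with
  | zero => simp
  | succ a ih => rw [pow_succ', sum_range_mul_centralBinom (p := p), ih, pow_succ']

theorem centralBinom_prime_pow (a : ℕ) : ((p ^ a).centralBinom : ZMod p) = 2 := by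
  induction a with
  | zero => simp [Nat.centralBinom]
  | succ a ih =>
    rw [pow_succ', ← add_zero (p * p ^ a), centralBinom_mul_add _ hp.out.pos, ih]
    simp

/-- `B r ≡ (-4)^r (m choose r)` reflects `m ≡ -1/2 (mod p)`. -/
theorem centralBinom_eq_neg_four_pow_mul_choose {m : ℕ} (hm : 2 * m + 1 = p) {r : ℕ}
    (hr : r ≤ m) : (r.centralBinom : ZMod p) = (-4) ^ r * (m.choose r : ZMod p) := by
  have hm0 : 2 * (m : ZMod p) + 1 = 0 := by
    exact_mod_cast (show ((2 * m + 1 : ℕ) : ZMod p) = 0 by rw [hm]; exact natCast_self p)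
  induction r with
  | zero => simp
  | succ r ih =>
    have hr' : r ≤ m := r.le_succ.trans hr
    have hsucc : ((r : ZMod p) + 1) ≠ 0 := by
      rw [← Nat.cast_succ, Ne, natCast_eq_zero_iff]
      exact fun h ↦ by have := Nat.le_of_dvd r.succ_pos h; omega
    have hB := congrArg (Nat.cast (R := ZMod p)) (Nat.succ_mul_centralBinom_succ r)
    have hC := congrArg (Nat.cast (R := ZMod p)) (Nat.choose_succ_right_eq m r)
    push_cast [Nat.cast_sub hr'] at hB hC
    apply mul_left_cancel₀ hsucc
    rw [hB, ih hr']
    linear_combination 4 * (-4 : ZMod p) ^ r * hC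
      + 2 * (-4 : ZMod p) ^ r * (m.choose r : ZMod p) * hm0

theorem sum_range_centralBinom {m : ℕ} (hm : 2 * m + 1 = p) :
    ∑ r ∈ range p, (r.centralBinom : ZMod p) = (-3) ^ m := by
  rw [← sum_subset (range_subset_range.mpr (by omega : m + 1 ≤ p)) fun r hp' hm' ↦
    centralBinom_eq_zero_of_le_two_mul (mem_range.mp hp') (by simp at hm'; omega)]
  calc ∑ r ∈ range (m + 1), (r.centralBinom : ZMod p)
      = ∑ r ∈ range (m + 1), (-4) ^ r * 1 ^ (m - r) * (m.choose r : ZMod p) :=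
        sum_congr rfl fun r hr ↦ by
          rw [one_pow, mul_one, centralBinom_eq_neg_four_pow_mul_choose hm (by simp at hr; omega)]
    _ = (-3) ^ m := by rw [← add_pow]; norm_num

end ZMod

theorem stmt12_general (p a : ℕ) (hp : p.Prime) (h3 : p % 3 = 1) :
    (∑ n ∈ Finset.range (p^a), (catalan n : ℤ)) ≡ 1 [ZMOD (p : ℤ)] := by
  have : Fact p.Prime := ⟨hp⟩
  have hB : ∑ n ∈ range (p ^ a), (n.centralBinom : ZMod p) = 1 := by
    rw [ZMod.sum_range_pow_centralBinom, ZMod.sum_range_centralBinom (m := p / 2)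
      (by have := hp.eq_two_or_odd; omega), ZMod.neg_three_pow_div_two h3, one_pow]
  have htel := two_mul_sum_range_catalan_add_centralBinom (R := ZMod p) (p ^ a)
  rw [hB, ZMod.centralBinom_prime_pow] at htel
  have h2 : (2 : ZMod p) ≠ 0 := by
    rw [show (2 : ZMod p) = ((2 : ℕ) : ZMod p) by norm_cast, Ne, ZMod.natCast_eq_zero_iff,
      Nat.prime_dvd_prime_iff_eq hp Nat.prime_two]
    omega
  rw [← ZMod.intCast_eq_intCast_iff]
  push_cast
  exact mul_left_cancel₀ h2 (by linear_combination htel)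

theorem stmt12 (p a : ℕ) (hp : p.Prime) (hp3 : 3 < p) (h3 : p % 3 = 1) (ha : 1 ≤ a) :
    (∑ n ∈ Finset.range (p^a), (catalan n : ℤ)) ≡ 1 [ZMOD (p : ℤ)] :=
  stmt12_general p a hp h3
end

section
/- For any prime p > 3 with p ≡ 2 (mod 3), and any even a ≥ 1, the sum of the Catalan numbers ∑_{n=0}^{p^a - 1} C_n is congruent to 1 modulo p. -/
/-!
Work in `ZMod p` with `S m = ∑_{n<m} C n` and `B m = ∑_{n<m} binom(2n, n)`. Writing `n = q p + r`
with `r < p`, Lucas' theorem gives `binom(2n, n) ≡ binom(2q, q) binom(2r, r)` if `2r < p` and `0`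
otherwise, while `C (q p + r) ≡ binom(2q, q) C r` if `2r < p`, `≡ C q - 2 binom(2q, q)` if
`r = p - 1`, and `≡ 0` otherwise. Summing over blocks of length `p`,
`B (m p) = β B m` and `S (m p) = (T - 2) B m + S m`, where `T = ∑_{2r<p} C r` and
`β = ∑_{2r<p} binom(2r, r) = (1 - 4)^((p-1)/2)`. For `p ≡ 2 (mod 3)`, `-3` is a non-residue
(a square root `y` of `-3` would make `(y - 1)/2` a cube root of unity of order `3 ∤ p - 1`),
so `β = -1` and the `T - 2` terms cancel in `S (m p²) = S m`. Hence `S (p^(2k)) = S 1 = 1`.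
-/

open Finset Nat

theorem catalan_add_choose_succ (n : ℕ) :
    catalan n + (2 * n).choose (n + 1) = (2 * n).choose n := by
  have hcat : (n + 1) * catalan n = (2 * n).choose n := succ_mul_catalan_eq_centralBinom n
  have hsucc : (2 * n).choose (n + 1) * (n + 1) = (2 * n).choose n * n := by
    rw [choose_succ_right_eq, show 2 * n - n = n by omega]
  refine Nat.eq_of_mul_eq_mul_left n.succ_pos ?_
  calc (n + 1) * (catalan n + (2 * n).choose (n + 1))
      = (n + 1) * catalan n + (2 * n).choose (n + 1) * (n + 1) := by ring
    _ = (n + 1) * (2 * n).choose n := by rw [hcat, hsucc]; ring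

theorem cast_catalan_eq_sub {R : Type*} [AddGroupWithOne R] (n : ℕ) :
    (catalan n : R) = ((2 * n).choose n : R) - ((2 * n).choose (n + 1) : R) :=
  eq_sub_of_add_eq (mod_cast congrArg Nat.cast (catalan_add_choose_succ n))

theorem sum_range_mul_eq_sum_sum {M : Type*} [AddCommMonoid M] (f : ℕ → M) (m k : ℕ) :
    ∑ n ∈ range (m * k), f n = ∑ q ∈ range m, ∑ r ∈ range k, f (q * k + r) := by
  induction m with
  | zero => simp
  | succ m ih => rw [succ_mul, sum_range_add, ih, sum_range_succ]

section

variable {p : ℕ} [Fact p.Prime]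

theorem cast_choose_mul_add_mul_add {r s : ℕ} (hr : r < p) (hs : s < p) (q t : ℕ) :
    ((q * p + r).choose (t * p + s) : ZMod p) = q.choose t * r.choose s := by
  have hp := (Fact.out : p.Prime).pos
  have hmod {a b : ℕ} (hb : b < p) : (a * p + b) % p = b := by
    rw [Nat.mul_add_mod_self_right, Nat.mod_eq_of_lt hb]
  have hdiv {a b : ℕ} (hb : b < p) : (a * p + b) / p = a := by
    rw [add_comm, Nat.add_mul_div_right _ _ hp, Nat.div_eq_of_lt hb, zero_add]
  rw [(ZMod.natCast_eq_natCast_iff _ _ _).mpr Choose.choose_modEq_choose_mod_mul_choose_div_nat,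
    hmod hr, hmod hs, hdiv hr, hdiv hs, Nat.cast_mul, mul_comm]

theorem cast_centralBinom_mul_add_of_two_mul_lt {r : ℕ} (hr : 2 * r < p) (q : ℕ) :
    ((q * p + r).centralBinom : ZMod p) = q.centralBinom * r.centralBinom := by
  simp only [centralBinom_eq_two_mul_choose]
  rw [show 2 * (q * p + r) = 2 * q * p + 2 * r by ring,
    cast_choose_mul_add_mul_add hr (by omega)]

theorem cast_centralBinom_mul_add_of_le_two_mul {r : ℕ} (hr : r < p) (hle : p ≤ 2 * r) (q : ℕ) :
    ((q * p + r).centralBinom : ZMod p) = 0 := by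
  rw [centralBinom_eq_two_mul_choose, show 2 * (q * p + r) = (2 * q + 1) * p + (2 * r - p) by
      zify [hle]; ring,
    cast_choose_mul_add_mul_add (by omega) hr, choose_eq_zero_of_lt (by omega : 2 * r - p < r)]
  simp

theorem cast_catalan_mul_add_of_two_mul_lt {r : ℕ} (hr : 2 * r < p) (q : ℕ) :
    (catalan (q * p + r) : ZMod p) = q.centralBinom * catalan r := by
  have hp := (Fact.out : p.Prime).two_le
  rw [cast_catalan_eq_sub, cast_catalan_eq_sub, centralBinom_eq_two_mul_choose,
    show 2 * (q * p + r) = 2 * q * p + 2 * r by ring, add_assoc,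
    cast_choose_mul_add_mul_add hr (by omega), cast_choose_mul_add_mul_add hr (by omega)]
  exact (mul_sub _ _ _).symm

theorem cast_catalan_mul_add_sub_one (q : ℕ) :
    (catalan (q * p + (p - 1)) : ZMod p) = catalan q - 2 * q.centralBinom := by
  have hp := (Fact.out : p.Prime).two_le
  have hchoose : (2 * q + 1).choose (q + 1) + catalan q = 2 * q.centralBinom := by
    rw [choose_succ_succ', centralBinom_eq_two_mul_choose, ← catalan_add_choose_succ]
    ring
  rw [cast_catalan_eq_sub,
    show 2 * (q * p + (p - 1)) = (2 * q + 1) * p + (p - 2) by zify [hp, (by omega : 1 ≤ p)]; ring,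
    show q * p + (p - 1) + 1 = (q + 1) * p + 0 by zify [hp, (by omega : 1 ≤ p)]; ring,
    cast_choose_mul_add_mul_add (by omega) (by omega),
    cast_choose_mul_add_mul_add (by omega) (by omega),
    choose_eq_zero_of_lt (by omega : p - 2 < p - 1)]
  have hcast : ((2 * q + 1).choose (q + 1) : ZMod p) + catalan q = 2 * q.centralBinom :=
    mod_cast congrArg Nat.cast hchoose
  rw [choose_zero_right, Nat.cast_zero, Nat.cast_one, mul_zero, mul_one]
  linear_combination -hcast

theorem cast_catalan_mul_add_of_le_two_mul {r : ℕ} (hr : r + 1 < p) (hle : p ≤ 2 * r) (q : ℕ) :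
    (catalan (q * p + r) : ZMod p) = 0 := by
  rw [cast_catalan_eq_sub, show 2 * (q * p + r) = (2 * q + 1) * p + (2 * r - p) by
      zify [hle]; ring, add_assoc,
    cast_choose_mul_add_mul_add (by omega) (by omega),
    cast_choose_mul_add_mul_add (by omega) (by omega),
    choose_eq_zero_of_lt (by omega : 2 * r - p < r),
    choose_eq_zero_of_lt (by omega : 2 * r - p < r + 1)]
  simp

theorem sum_cast_centralBinom_block (q : ℕ) :
    ∑ r ∈ range p, ((q * p + r).centralBinom : ZMod p) =
      q.centralBinom * ∑ r ∈ range p with 2 * r < p, (r.centralBinom : ZMod p) := by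
  rw [← sum_filter_add_sum_filter_not (range p) (fun r ↦ 2 * r < p), mul_sum,
    sum_eq_zero (s := {r ∈ range p | ¬2 * r < p}), add_zero]
  · refine sum_congr rfl fun r hr ↦ ?_
    exact cast_centralBinom_mul_add_of_two_mul_lt (mem_filter.mp hr).2 q
  · intro r hr
    simp only [mem_filter, mem_range, not_lt] at hr
    exact cast_centralBinom_mul_add_of_le_two_mul hr.1 hr.2 q

theorem sum_cast_catalan_block (q : ℕ) :
    ∑ r ∈ range p, (catalan (q * p + r) : ZMod p) =
      q.centralBinom * ∑ r ∈ range p with 2 * r < p, (catalan r : ZMod p) +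
        (catalan q - 2 * q.centralBinom) := by
  have hp := (Fact.out : p.Prime).two_le
  rw [← sum_filter_add_sum_filter_not (range p) (fun r ↦ 2 * r < p), mul_sum,
    sum_eq_single_of_mem (s := {r ∈ range p | ¬2 * r < p}) (p - 1) (by simp; omega),
    cast_catalan_mul_add_sub_one]
  · congr 1
    refine sum_congr rfl fun r hr ↦ ?_
    exact cast_catalan_mul_add_of_two_mul_lt (mem_filter.mp hr).2 q
  · intro r hr hr1
    simp only [mem_filter, mem_range, not_lt] at hr
    exact cast_catalan_mul_add_of_le_two_mul (by omega) hr.2 q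

-- `binom(2r, r) = (-4)^r binom(-1/2, r)`, and `-1/2 = (p - 1)/2` in `ZMod p`.
theorem cast_centralBinom_eq_neg_four_pow_mul_choose (hp2 : p ≠ 2) {r : ℕ} (hr : r ≤ p / 2) :
    (r.centralBinom : ZMod p) = (-4) ^ r * (p / 2).choose r := by
  have hodd := (Fact.out : p.Prime).eq_two_or_odd.resolve_left hp2
  induction r with
  | zero => simp
  | succ r ih =>
    have hr0 : ((r + 1 : ℕ) : ZMod p) ≠ 0 := by
      rw [Ne, ZMod.natCast_eq_zero_iff]
      exact Nat.not_dvd_of_pos_of_lt r.succ_pos (by omega)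
    have hcb :
        ((r + 1 : ℕ) : ZMod p) * (r + 1).centralBinom = 2 * (2 * r + 1) * r.centralBinom :=
      mod_cast congrArg Nat.cast (succ_mul_centralBinom_succ r)
    have hch :
        ((p / 2).choose (r + 1) : ZMod p) * (r + 1 : ℕ) = (p / 2).choose r * (p / 2 - r : ℕ) :=
      mod_cast congrArg Nat.cast (choose_succ_right_eq (p / 2) r)
    have hhalf : (2 * (p / 2) + 1 : ℕ) = (0 : ZMod p) := by
      rw [show 2 * (p / 2) + 1 = p by omega, ZMod.natCast_self]
    push_cast [Nat.cast_sub (by omega : r ≤ p / 2)] at hr0 hcb hch hhalf ⊢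
    apply mul_left_cancel₀ hr0
    rw [hcb, ih (by omega)]
    linear_combination (-(-4 : ZMod p) ^ (r + 1)) * hch +
      (2 * (-4 : ZMod p) ^ r * (p / 2).choose r) * hhalf

theorem sum_cast_centralBinom_half (hp2 : p ≠ 2) :
    ∑ r ∈ range p with 2 * r < p, (r.centralBinom : ZMod p) = (-3) ^ (p / 2) := by
  have hodd := (Fact.out : p.Prime).eq_two_or_odd.resolve_left hp2
  have hfilter : {r ∈ range p | 2 * r < p} = range (p / 2 + 1) := by
    ext r
    simp only [mem_filter, mem_range]
    omega
  rw [hfilter, show (-3 : ZMod p) = -4 + 1 by norm_num, add_pow]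
  refine sum_congr rfl fun r hr ↦ ?_
  rw [cast_centralBinom_eq_neg_four_pow_mul_choose hp2 (by simpa [Nat.lt_succ_iff] using hr),
    one_pow, mul_one]

theorem not_isSquare_neg_three (hp2 : p ≠ 2) (h3 : p % 3 = 2) : ¬IsSquare (-3 : ZMod p) := by
  rintro ⟨y, hy⟩
  have h2 : (2 : ZMod p) ≠ 0 := Ring.two_ne_zero (by rwa [ZMod.ringChar_zmod_n])
  obtain ⟨ω, hω2⟩ : ∃ ω : ZMod p, 2 * ω = y - 1 := ⟨(y - 1) / 2, mul_div_cancel₀ _ h2⟩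
  have hω : ω ^ 2 + ω + 1 = 0 := by
    refine (mul_eq_zero.mp (?_ : (2 : ZMod p) ^ 2 * _ = 0)).resolve_left (pow_ne_zero 2 h2)
    linear_combination (2 * ω + y + 1) * hω2 - hy
  have hω1 : ω ≠ 1 := by
    rintro rfl
    have h3' : ((3 : ℕ) : ZMod p) = 0 := by push_cast; linear_combination hω
    have := Nat.le_of_dvd three_pos ((ZMod.natCast_eq_zero_iff _ _).mp h3')
    omega
  have : Fact (Nat.Prime 3) := ⟨Nat.prime_three⟩
  have hord : orderOf ω = 3 := orderOf_eq_prime (by linear_combination (ω - 1) * hω) hω1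
  have hdvd := ZMod.orderOf_dvd_card_sub_one (p := p) (a := ω) (by rintro rfl; simp at hω)
  rw [hord] at hdvd
  omega

theorem neg_three_pow_half (hp2 : p ≠ 2) (h3 : p % 3 = 2) : (-3 : ZMod p) ^ (p / 2) = -1 := by
  have h0 : (-3 : ZMod p) ≠ 0 := fun h ↦ not_isSquare_neg_three hp2 h3 (h ▸ ⟨0, by simp⟩)
  exact (ZMod.pow_div_two_eq_neg_one_or_one p h0).resolve_left
    fun h ↦ not_isSquare_neg_three hp2 h3 ((ZMod.euler_criterion p h0).mpr h)

theorem sum_cast_centralBinom_range_mul (hp2 : p ≠ 2) (m : ℕ) :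
    ∑ n ∈ range (m * p), (n.centralBinom : ZMod p) =
      (-3) ^ (p / 2) * ∑ n ∈ range m, (n.centralBinom : ZMod p) := by
  rw [sum_range_mul_eq_sum_sum, mul_sum]
  refine sum_congr rfl fun q _ ↦ ?_
  rw [sum_cast_centralBinom_block, sum_cast_centralBinom_half hp2, mul_comm]

theorem sum_cast_catalan_range_mul (m : ℕ) :
    ∑ n ∈ range (m * p), (catalan n : ZMod p) =
      (∑ r ∈ range p with 2 * r < p, (catalan r : ZMod p) - 2) *
        ∑ n ∈ range m, (n.centralBinom : ZMod p) + ∑ n ∈ range m, (catalan n : ZMod p) := by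
  simp only [sum_range_mul_eq_sum_sum, sum_cast_catalan_block, sum_add_distrib, sum_sub_distrib,
    ← sum_mul, ← mul_sum]
  ring

theorem sum_cast_catalan_range_mul_mul (hp2 : p ≠ 2) (h3 : p % 3 = 2) (m : ℕ) :
    ∑ n ∈ range (m * p * p), (catalan n : ZMod p) = ∑ n ∈ range m, (catalan n : ZMod p) := by
  rw [sum_cast_catalan_range_mul, sum_cast_catalan_range_mul, sum_cast_centralBinom_range_mul hp2,
    neg_three_pow_half hp2 h3]
  ring

theorem sum_cast_catalan_range_pow_two_mul (hp2 : p ≠ 2) (h3 : p % 3 = 2) (k : ℕ) :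
    ∑ n ∈ range (p ^ (2 * k)), (catalan n : ZMod p) = 1 := by
  induction k with
  | zero => simp
  | succ k ih =>
    rw [mul_add_one, pow_add, sq, ← mul_assoc, sum_cast_catalan_range_mul_mul hp2 h3, ih]

end

theorem stmt14_general (p a : ℕ) (hp : p.Prime) (hp3 : 3 < p) (h3 : p % 3 = 2) (heven : Even a) :
    (∑ n ∈ Finset.range (p^a), (catalan n : ℤ)) ≡ 1 [ZMOD (p : ℤ)] := by
  have : Fact p.Prime := ⟨hp⟩
  obtain ⟨k, rfl⟩ := heven
  rw [← ZMod.intCast_eq_intCast_iff, ← two_mul]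
  push_cast
  exact sum_cast_catalan_range_pow_two_mul (by omega) h3 k

theorem stmt14 (p a : ℕ) (hp : p.Prime) (hp3 : 3 < p) (h3 : p % 3 = 2) (ha : 1 ≤ a) (heven : Even a) :
    (∑ n ∈ Finset.range (p^a), (catalan n : ℤ)) ≡ 1 [ZMOD (p : ℤ)] :=
  stmt14_general p a hp hp3 h3 heven
end
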